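/- Let A be a unital associative k-algebra. The operation f ⊙ g := f ∘ QSh(g) ∘ ι on U(QSh(A), A), where QSh(g) : QSh(QSh⁺(A)) → QSh(A) sends a word 𝐚¹ ⊗ … ⊗ 𝐚ʳ of nonempty words of QSh(A) to the word g(𝐚¹)…g(𝐚ʳ) and ι : QSh(A) → QSh(QSh⁺(A)) is the sum of iterated reduced deconcatenation coproducts, makes U(QSh(A), A) an associative monoid (the universal semigroup of A) whose two-sided unit is the map j: f ⊙ j = f and j ⊙ f = f for all f ∈ U(QSh(A), A). This product corresponds, under the bijection U(QSh(A), A) ≅ Hom_{Coalg}(QSh(A), QSh(A)) given by f ↦ QSh(f) ∘ ι, to composition of coalgebra endomorphisms of QSh(A). -/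

import Mathlib

open scoped TensorProduct
open TensorProduct

noncomputable section

namespace QShPaper

variable (k : Type*) [Field k]

/-! ### Convolution algebra of linear maps from a coalgebra to an algebra -/

section Conv

variable {Q : Type*} [AddCommGroup Q] [Module k Q]
variable (A : Type*) [Ring A] [Algebra k A]

/-- The convolution product `f * g := m_A ∘ (f ⊗ g) ∘ Δ` associated to a
comultiplication `com` on `Q`. -/
def conv (com : Q →ₗ[k] Q ⊗[k] Q) (f g : Q →ₗ[k] A) : Q →ₗ[k] A :=
  LinearMap.mul' k A ∘ₗ TensorProduct.map f g ∘ₗ com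

/-- The unit `u_A ∘ η` of the convolution product. -/
def convUnit (cou : Q →ₗ[k] k) : Q →ₗ[k] A := Algebra.linearMap k A ∘ₗ cou

/-- Convolution powers `f^{*n}`, with `f^{*0}` the convolution unit. -/
def convPow (com : Q →ₗ[k] Q ⊗[k] Q) (cou : Q →ₗ[k] k) (f : Q →ₗ[k] A) : ℕ → (Q →ₗ[k] A)
  | 0 => convUnit k A cou
  | n + 1 => conv k A com f (convPow com cou f n)

end Conv

/-! ### Iterated (reduced) coproducts, conilpotency -/

section Red

variable {Q : Type*} [AddCommGroup Q] [Module k Q]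

/-- `Q ≃ Q^{⊗1}`. -/
def toPow1 : Q ≃ₗ[k] ⨂[k]^1 Q := (PiTensorProduct.subsingletonEquiv (s := fun _ : Fin 1 => Q) (0 : Fin 1)).symm

variable (one : Q) (com : Q →ₗ[k] Q ⊗[k] Q)

/-- The reduced coproduct `Δ'(h) := Δ(h) − 1 ⊗ h − h ⊗ 1`. -/
def redComul : Q →ₗ[k] Q ⊗[k] Q :=
  com - TensorProduct.mk k Q Q one - (TensorProduct.mk k Q Q).flip one

/-- Iterated reduced coproducts: `redIter n = Δ'^{[n+1]} : Q → Q^{⊗(n+1)}`,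
with `Δ'^{[1]} = Id` and `Δ'^{[n+1]} = (Id ⊗ Δ'^{[n]}) ∘ Δ'`. -/
def redIter : (n : ℕ) → Q →ₗ[k] ⨂[k]^(n+1) Q
  | 0 => (toPow1 k).toLinearMap
  | n + 1 =>
      (TensorPower.cast k Q (show 1 + (n+1) = n+1+1 by omega)).toLinearMap ∘ₗ
        (TensorPower.mulEquiv (R := k) (M := Q) (n := 1) (m := n+1)).toLinearMap ∘ₗ
          TensorProduct.map (toPow1 k).toLinearMap (redIter n) ∘ₗ redComul k one com

/-- Iterated coproducts: `fullIter n = Δ^{[n+1]} : Q → Q^{⊗(n+1)}`,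
with `Δ^{[1]} = Id` and `Δ^{[n+1]} = (Id ⊗ Δ^{[n]}) ∘ Δ`. -/
def fullIter : (n : ℕ) → Q →ₗ[k] ⨂[k]^(n+1) Q
  | 0 => (toPow1 k).toLinearMap
  | n + 1 =>
      (TensorPower.cast k Q (show 1 + (n+1) = n+1+1 by omega)).toLinearMap ∘ₗ
        (TensorPower.mulEquiv (R := k) (M := Q) (n := 1) (m := n+1)).toLinearMap ∘ₗ
          TensorProduct.map (toPow1 k).toLinearMap (fullIter n) ∘ₗ com

/-- A (coaugmented) coalgebra is (locally) conilpotent if every element of the kernel of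
the counit. is annihilated by some iterated reduced coproduct. -/
def IsConilpotent (cou : Q →ₗ[k] k) : Prop :=
  ∀ x ∈ LinearMap.ker cou, ∃ n, redIter k one com n x = 0

end Red

/-- `m_A^{[n]} ∘ f^{⊗n} : H^{⊗n} → A`. -/
def prodPow {H : Type*} [AddCommGroup H] [Module k H] (A : Type*) [Ring A] [Algebra k A]
    (f : H →ₗ[k] A) (n : ℕ) : (⨂[k]^n H) →ₗ[k] A :=
  PiTensorProduct.lift ((MultilinearMap.mkPiAlgebraFin k n A).compLinearMap fun _ => f)


/-- A model of the quasi-shuffle Hopf algebra `QSh(A) = ⊕_{n≥0} A^{⊗n}` over a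
(possibly non-unital) associative algebra `A`: `emp` is the empty word, `cons` is
prepending of a letter, `mul` is the quasi-shuffle product `⧢`, `comul` the
deconcatenation coproduct and `counit` the counit. -/
structure QShModel (A Q : Type*) [NonUnitalRing A] [Module k A]
    [SMulCommClass k A A] [IsScalarTower k A A] [AddCommGroup Q] [Module k Q] where
  emp : Q
  cons : A →ₗ[k] Q →ₗ[k] Q
  mul : Q →ₗ[k] Q →ₗ[k] Q
  comul : Q →ₗ[k] Q ⊗[k] Q
  counit : Q →ₗ[k] k
  /-- words span `QSh(A)` -/
  span_words : Submodule.span k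
    (Set.range fun w : List A => w.foldr (fun a u => cons a u) emp) = ⊤
  /-- `QSh(A) ≅ k ⊕ (A ⊗ QSh(A))` via `(c, a ⊗ u) ↦ c • 1 + a·u` -/
  theta_bij : Function.Bijective
    ((LinearMap.toSpanSingleton k Q emp).coprod (TensorProduct.lift cons))
  mul_emp_left : ∀ u, mul emp u = u
  mul_emp_right : ∀ u, mul u emp = u
  /-- the quasi-shuffle recursion `av ⧢ bw = a(v ⧢ bw) + b(av ⧢ w) + (a·_A b)(v ⧢ w)` -/
  mul_cons : ∀ (a b : A) (v w : Q),
    mul (cons a v) (cons b w) =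
      cons a (mul v (cons b w)) + cons b (mul (cons a v) w) + cons (a * b) (mul v w)
  comul_emp : comul emp = emp ⊗ₜ[k] emp
  /-- the deconcatenation recursion -/
  comul_cons : ∀ (a : A) (u : Q),
    comul (cons a u) = emp ⊗ₜ[k] (cons a u) + (TensorProduct.map (cons a) LinearMap.id) (comul u)
  counit_emp : counit emp = 1
  counit_cons : ∀ (a : A) (u : Q), counit (cons a u) = 0

namespace QShModel

variable {k}
variable {A Q : Type*} [NonUnitalRing A] [Module k A]
    [SMulCommClass k A A] [IsScalarTower k A A] [AddCommGroup Q] [Module k Q]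

/-- The word `a_1…a_n ∈ QSh(A)`. -/
def ofWord (M : QShModel k A Q) (w : List A) : Q := w.foldr (fun a u => M.cons a u) M.emp

/-- The collapse `H^{⊗(n+1)} → QSh(A)`, `x_1 ⊗ … ⊗ x_{n+1} ↦ c(x_1)…c(x_{n+1})`
(a word of length `n+1`) induced by a linear map `c : H → A`. -/
def wordMap (M : QShModel k A Q) {H : Type*} [AddCommGroup H] [Module k H]
    (c : H →ₗ[k] A) : (n : ℕ) → (⨂[k]^(n+1) H) →ₗ[k] Q
  | 0 => ((M.cons ∘ₗ c).flip M.emp) ∘ₗ (toPow1 k).symm.toLinearMap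
  | n + 1 =>
      TensorProduct.lift (M.cons ∘ₗ c) ∘ₗ
        TensorProduct.map (toPow1 k).symm.toLinearMap (M.wordMap c n) ∘ₗ
          (TensorPower.mulEquiv (R := k) (M := H) (n := 1) (m := n+1)).symm.toLinearMap ∘ₗ
            (TensorPower.cast k H (show n+1+1 = 1+(n+1) by omega)).toLinearMap

/-- `Ψ = QSh(c) ∘ ι : H → QSh(A)`, i.e. `Ψ(1) = 1` and, for `h` in the kernel of the
counit, `Ψ(h) = Σ_{n≥1} c^{⊗n}(Δ'^{[n]}(h))` (a finite sum, each term being viewed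
as a word of length `n`). -/
def IotaComp (M : QShModel k A Q) {H : Type*} [AddCommGroup H] [Module k H]
    (oneH : H) (com : H →ₗ[k] H ⊗[k] H) (cou : H →ₗ[k] k)
    (c : H →ₗ[k] A) (Ψ : H →ₗ[k] Q) : Prop :=
  Ψ oneH = M.emp ∧
    ∀ h ∈ LinearMap.ker cou, ∃ N, ∀ n ≥ N,
      Ψ h = ∑ i ∈ Finset.range (n+1), M.wordMap c i (redIter k oneH com i h)

end QShModel
end QShPaper

namespace QShPaper

/-- The distinguished element `j ∈ U(QSh(A), A)`: `j(1) = 1_A`, `j(a) = a` on letters, and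
`j` vanishes on words of length `≥ 2`. -/
def QShModel.IsJ {k : Type*} [Field k] {A Q : Type*} [Ring A] [Algebra k A]
    [AddCommGroup Q] [Module k Q] (M : QShModel k A Q) (j : Q →ₗ[k] A) : Prop :=
  j M.emp = 1 ∧ (∀ a : A, j (M.cons a M.emp) = a) ∧
    ∀ (a b : A) (u : Q), j (M.cons a (M.cons b u)) = 0

end QShPaper

/-!
On words, `Φ = QSh(c) ∘ ι` is characterised by `Φ(1) = 1` and the recursion
`Φ(a₁⋯aₙ) = Σ_{s=1}^{n} c(a₁⋯a_s) · Φ(a_{s+1}⋯aₙ)`: peel off the first tensor factor of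
`Δ'^{[i+1]} = (Id ⊗ Δ'^{[i]}) ∘ Δ'`, and note that `Δ'^{[i+1]}` kills the words of length `≤ i`.
The recursion makes `Φ` counital and comultiplicative (by induction on the length, exchanging a
double sum over `1 ≤ s ≤ t ≤ n`), and gives `j ∘ Φ = c` because `j` kills `a · u` whenever `u` has
positive length; for `c = j` it is solved by the identity.

Conversely, iterated reduced coproducts are natural for coalgebra maps fixing `1`, so
`QSh(c) ∘ ι ∘ Ψ = QSh(c ∘ Ψ) ∘ ι`. A coalgebra endomorphism `Ψ` does fix `1`: `y = Ψ(1) - 1`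
satisfies `Δ'(y) = y ⊗ y`, so `Δ'^{[n]}(y) = y^{⊗n}`, which vanishes for large `n` only if `y = 0`.
Applied to `Id = QSh(j) ∘ ι` this gives `Ψ = QSh(j ∘ Ψ) ∘ ι`, and applied to `Φ_g` it gives
`Φ_g ∘ Φ_h = QSh(g ∘ Φ_h) ∘ ι`.
-/

namespace QShPaper

open Filter

variable {k : Type*} [Field k]

theorem eq_zero_of_tmul_eq_zero {V W : Type*} [AddCommGroup V] [Module k V]
    [AddCommGroup W] [Module k W] {u : V} {v : W} (hu : u ≠ 0) (h : u ⊗ₜ[k] v = 0) : v = 0 := by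
  obtain ⟨f, hf⟩ := Module.Projective.exists_dual_ne_zero k hu
  have : f u • v = 0 := by
    simpa using congrArg ((TensorProduct.lid k W).toLinearMap ∘ₗ TensorProduct.map f LinearMap.id) h
  exact (smul_eq_zero.mp this).resolve_left hf

section Coaugmented

variable {H : Type*} [AddCommGroup H] [Module k H] {one : H} {com : H →ₗ[k] H ⊗[k] H}
variable {H' : Type*} [AddCommGroup H'] [Module k H'] {one' : H'} {com' : H' →ₗ[k] H' ⊗[k] H'}

theorem redIter_ne_zero_of_redComul_eq_tmul_self {y : H} (hy : y ≠ 0)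
    (h : redComul k one com y = y ⊗ₜ[k] y) (n : ℕ) : redIter k one com n y ≠ 0 := by
  induction n with
  | zero => simpa [redIter] using hy
  | succ n ih =>
    simp only [redIter, LinearMap.comp_apply, LinearEquiv.coe_coe, h, TensorProduct.map_tmul,
      LinearEquiv.map_ne_zero_iff]
    exact fun h0 => ih (eq_zero_of_tmul_eq_zero (by simpa using hy) h0)

theorem eq_of_comul_eq_tmul_self {cou : H →ₗ[k] k} (hconil : IsConilpotent k one com cou)
    (hone : com one = one ⊗ₜ[k] one) {g : H} (hcou : cou g = cou one)
    (hg : com g = g ⊗ₜ[k] g) : g = one := by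
  have hred : redComul k one com (g - one) = (g - one) ⊗ₜ[k] (g - one) := by
    simp only [redComul, LinearMap.sub_apply, TensorProduct.mk_apply, LinearMap.flip_apply,
      map_sub, hg, hone, TensorProduct.sub_tmul, TensorProduct.tmul_sub]
    abel
  obtain ⟨n, hn⟩ := hconil (g - one) (by simp [hcou])
  by_contra hne
  exact redIter_ne_zero_of_redComul_eq_tmul_self (sub_ne_zero.mpr hne) hred n hn

theorem redComul_comp {Ψ : H →ₗ[k] H'} (hone : Ψ one = one')
    (hcom : com' ∘ₗ Ψ = TensorProduct.map Ψ Ψ ∘ₗ com) :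
    redComul k one' com' ∘ₗ Ψ = TensorProduct.map Ψ Ψ ∘ₗ redComul k one com := by
  ext x
  have hx : com' (Ψ x) = TensorProduct.map Ψ Ψ (com x) := LinearMap.congr_fun hcom x
  simp [redComul, hx, hone]

end Coaugmented

theorem drop_ne_nil_of_lt_length {α : Type*} {w : List α} {s : ℕ} (hs : s < w.length) :
    w.drop s ≠ [] :=
  List.drop_eq_nil_iff.not.mpr (Nat.not_le.mpr hs)

def eventuallySubmodule {ι R V : Type*} [Semiring R] [AddCommMonoid V] [Module R V]
    (l : Filter ι) (p : ι → Submodule R V) : Submodule R V where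
  carrier := {x | ∀ᶠ i in l, x ∈ p i}
  add_mem' hx hy := (hx.and hy).mono fun _ h => add_mem h.1 h.2
  zero_mem' := Eventually.of_forall fun _ => zero_mem _
  smul_mem' c _ hx := hx.mono fun _ h => Submodule.smul_mem _ c h

namespace QShModel

section NonUnital

variable {A Q : Type*} [NonUnitalRing A] [Module k A] [SMulCommClass k A A] [IsScalarTower k A A]
  [AddCommGroup Q] [Module k Q] (M : QShModel k A Q)
variable {H : Type*} [AddCommGroup H] [Module k H] {one : H} {com : H →ₗ[k] H ⊗[k] H}
variable {H' : Type*} [AddCommGroup H'] [Module k H'] {one' : H'} {com' : H' →ₗ[k] H' ⊗[k] H'}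

theorem wordMap_comp_redIter_zero (c : H →ₗ[k] A) :
    M.wordMap c 0 ∘ₗ redIter k one com 0 = (M.cons ∘ₗ c).flip M.emp := by
  ext x
  simp [wordMap, redIter]

theorem wordMap_comp_redIter_succ (c : H →ₗ[k] A) (n : ℕ) :
    M.wordMap c (n + 1) ∘ₗ redIter k one com (n + 1) =
      TensorProduct.lift (M.cons ∘ₗ c) ∘ₗ
        (M.wordMap c n ∘ₗ redIter k one com n).lTensor H ∘ₗ redComul k one com := by
  ext x
  simp only [wordMap, redIter, LinearMap.comp_apply, LinearEquiv.coe_coe]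
  rw [TensorPower.cast_cast, TensorPower.cast_refl, LinearEquiv.refl_apply,
    LinearEquiv.symm_apply_apply, ← LinearMap.comp_apply (TensorProduct.map _ _),
    ← TensorProduct.map_comp]
  simp [LinearMap.lTensor]

theorem wordMap_comp_redIter_comp {Ψ : H →ₗ[k] H'} (hone : Ψ one = one')
    (hcom : com' ∘ₗ Ψ = TensorProduct.map Ψ Ψ ∘ₗ com) (c : H' →ₗ[k] A) (n : ℕ) :
    M.wordMap c n ∘ₗ redIter k one' com' n ∘ₗ Ψ = M.wordMap (c ∘ₗ Ψ) n ∘ₗ redIter k one com n := by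
  induction n with
  | zero =>
    rw [← LinearMap.comp_assoc, wordMap_comp_redIter_zero, wordMap_comp_redIter_zero]
    ext x
    simp
  | succ n ih =>
    rw [← LinearMap.comp_assoc, wordMap_comp_redIter_succ, wordMap_comp_redIter_succ, ← ih,
      LinearMap.comp_assoc, LinearMap.comp_assoc, redComul_comp hone hcom]
    simp only [← LinearMap.comp_assoc]
    congr 1
    apply TensorProduct.ext'
    intro x y
    simp

/-- The partial sums `Σ_{i ≤ n} QSh(c) ∘ Δ'^{[i+1]}` of `QSh(c) ∘ ι`. -/
def iotaSum (one : H) (com : H →ₗ[k] H ⊗[k] H) (c : H →ₗ[k] A) (n : ℕ) : H →ₗ[k] Q :=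
  ∑ i ∈ Finset.range (n + 1), M.wordMap c i ∘ₗ redIter k one com i

theorem iotaSum_succ (c : H →ₗ[k] A) (n : ℕ) :
    M.iotaSum one com c (n + 1) = (M.cons ∘ₗ c).flip M.emp +
      TensorProduct.lift (M.cons ∘ₗ c) ∘ₗ (M.iotaSum one com c n).lTensor H ∘ₗ
        redComul k one com := by
  simp only [iotaSum, Finset.sum_range_succ' _ (n + 1), wordMap_comp_redIter_succ,
    wordMap_comp_redIter_zero, ← LinearMap.coe_lTensorHom, map_sum]
  rw [add_comm]
  congr 1
  ext x
  simp

theorem iotaSum_comp {Ψ : H →ₗ[k] H'} (hone : Ψ one = one')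
    (hcom : com' ∘ₗ Ψ = TensorProduct.map Ψ Ψ ∘ₗ com) (c : H' →ₗ[k] A) (n : ℕ) :
    M.iotaSum one' com' c n ∘ₗ Ψ = M.iotaSum one com (c ∘ₗ Ψ) n := by
  simp only [iotaSum, ← M.wordMap_comp_redIter_comp hone hcom]
  ext x
  simp

theorem iotaComp_iff {cou : H →ₗ[k] k} {c : H →ₗ[k] A} {Φ : H →ₗ[k] Q} :
    M.IotaComp one com cou c Φ ↔ Φ one = M.emp ∧
      LinearMap.ker cou ≤
        eventuallySubmodule atTop fun n => LinearMap.eqLocus Φ (M.iotaSum one com c n) := by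
  simp [IotaComp, iotaSum, SetLike.le_def, eventuallySubmodule, eventually_atTop]

variable {M} in
theorem IotaComp.comp {cou' : H' →ₗ[k] k} {cou : H →ₗ[k] k} {c : H' →ₗ[k] A}
    {Φ : H' →ₗ[k] Q} (hΦ : M.IotaComp one' com' cou' c Φ) {Ψ : H →ₗ[k] H'}
    (hone : Ψ one = one') (hcom : com' ∘ₗ Ψ = TensorProduct.map Ψ Ψ ∘ₗ com)
    (hcou : cou' ∘ₗ Ψ = cou) : M.IotaComp one com cou (c ∘ₗ Ψ) (Φ ∘ₗ Ψ) := by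
  rw [iotaComp_iff] at hΦ ⊢
  refine ⟨by simp [hone, hΦ.1], fun h hh => ?_⟩
  have hΨh : Ψ h ∈ LinearMap.ker cou' := by simpa [← hcou] using hh
  refine (hΦ.2 hΨh).mono fun n hn => ?_
  rw [LinearMap.mem_eqLocus, ← M.iotaSum_comp hone hcom]
  exact hn

@[simp] theorem ofWord_nil : M.ofWord [] = M.emp := rfl

@[simp] theorem ofWord_cons (a : A) (w : List A) :
    M.ofWord (a :: w) = M.cons a (M.ofWord w) := rfl

theorem ext_ofWord {B : Type*} [AddCommGroup B] [Module k B] {f g : Q →ₗ[k] B}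
    (h : ∀ w, f (M.ofWord w) = g (M.ofWord w)) : f = g :=
  LinearMap.ext_on_range M.span_words h

theorem counit_ofWord {w : List A} (hw : w ≠ []) : M.counit (M.ofWord w) = 0 := by
  obtain ⟨a, v, rfl⟩ := List.exists_cons_of_ne_nil hw
  exact M.counit_cons a _

theorem ofWord_mem_ker_counit {w : List A} (hw : w ≠ []) :
    M.ofWord w ∈ LinearMap.ker M.counit :=
  M.counit_ofWord hw

theorem ker_counit_le_span :
    LinearMap.ker M.counit ≤ Submodule.span k (M.ofWord '' {w | w ≠ []}) := by
  intro x hx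
  let P : Q →ₗ[k] Q := LinearMap.id - (LinearMap.toSpanSingleton k Q M.emp) ∘ₗ M.counit
  have hPx : P x ∈ (⊤ : Submodule k Q).map P := ⟨x, trivial, rfl⟩
  rw [← M.span_words, Submodule.map_span] at hPx
  have hP : P x = x := by simp [P, LinearMap.mem_ker.mp hx]
  rw [← hP]
  refine Submodule.span_le.mpr ?_ hPx
  rintro _ ⟨_, ⟨w, rfl⟩, rfl⟩
  rcases eq_or_ne w [] with rfl | hw
  · simp [P, M.counit_emp]
  · have : P (M.ofWord w) = M.ofWord w := by simp [P, M.counit_ofWord hw]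
    exact this ▸ Submodule.subset_span ⟨w, hw, rfl⟩

theorem comul_ofWord (w : List A) :
    M.comul (M.ofWord w) =
      ∑ t ∈ Finset.range (w.length + 1), M.ofWord (w.take t) ⊗ₜ[k] M.ofWord (w.drop t) := by
  induction w with
  | nil => simpa using M.comul_emp
  | cons a v ih =>
    rw [ofWord_cons, M.comul_cons, ih, map_sum, List.length_cons, Finset.sum_range_succ' _ (_ + 1),
      add_comm]
    simp

theorem comul_ofWord_drop (w : List A) {s : ℕ} (hs : s ≤ w.length) :
    M.comul (M.ofWord (w.drop s)) =
      ∑ t ∈ Finset.Ico s (w.length + 1),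
        M.ofWord ((w.take t).drop s) ⊗ₜ[k] M.ofWord (w.drop t) := by
  rw [comul_ofWord, Finset.sum_Ico_eq_sum_range, List.length_drop,
    show w.length + 1 - s = w.length - s + 1 by omega]
  simp [List.drop_take, List.drop_drop]

theorem redComul_ofWord {w : List A} (hw : w ≠ []) :
    redComul k M.emp M.comul (M.ofWord w) =
      ∑ s ∈ Finset.Ico 1 w.length, M.ofWord (w.take s) ⊗ₜ[k] M.ofWord (w.drop s) := by
  have hlen : 0 < w.length := List.length_pos_iff.mpr hw
  rw [redComul, LinearMap.sub_apply, LinearMap.sub_apply, comul_ofWord, Finset.range_eq_Ico,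
    Finset.sum_eq_sum_Ico_succ_bot (by omega), Finset.sum_Ico_succ_top hlen]
  simp

theorem redIter_ofWord_eq_zero {n : ℕ} {w : List A} (hw : w ≠ []) (hn : w.length ≤ n) :
    redIter k M.emp M.comul n (M.ofWord w) = 0 := by
  induction n generalizing w with
  | zero => exact absurd (List.length_pos_iff.mpr hw) (by omega)
  | succ n ih =>
    simp only [redIter, LinearMap.comp_apply, LinearEquiv.coe_coe, M.redComul_ofWord hw,
      map_sum, TensorProduct.map_tmul]
    refine Finset.sum_eq_zero fun s hs => ?_
    rw [Finset.mem_Ico] at hs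
    rw [ih (drop_ne_nil_of_lt_length hs.2) (by simp; omega)]
    simp

theorem isConilpotent : IsConilpotent k M.emp M.comul M.counit := by
  intro x hx
  suffices x ∈ eventuallySubmodule atTop fun n => LinearMap.ker (redIter k M.emp M.comul n) from
    this.exists
  refine (M.ker_counit_le_span.trans (Submodule.span_le.mpr ?_)) hx
  rintro _ ⟨w, hw, rfl⟩
  exact (eventually_ge_atTop w.length).mono fun n hn => M.redIter_ofWord_eq_zero hw hn

theorem iotaSum_succ_ofWord (c : Q →ₗ[k] A) (n : ℕ) {w : List A} (hw : w ≠ []) :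
    M.iotaSum M.emp M.comul c (n + 1) (M.ofWord w) = M.cons (c (M.ofWord w)) M.emp +
      ∑ s ∈ Finset.Ico 1 w.length,
        M.cons (c (M.ofWord (w.take s))) (M.iotaSum M.emp M.comul c n (M.ofWord (w.drop s))) := by
  simp [iotaSum_succ, M.redComul_ofWord hw]

def IotaRec (c : Q →ₗ[k] A) (Φ : Q →ₗ[k] Q) : Prop :=
  Φ M.emp = M.emp ∧ ∀ w : List A, w ≠ [] →
    Φ (M.ofWord w) = M.cons (c (M.ofWord w)) M.emp + ∑ s ∈ Finset.Ico 1 w.length,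
      M.cons (c (M.ofWord (w.take s))) (Φ (M.ofWord (w.drop s)))

variable {M} in
theorem IotaRec.apply_ofWord {c : Q →ₗ[k] A} {Φ : Q →ₗ[k] Q} (hΦ : M.IotaRec c Φ)
    {w : List A} (hw : w ≠ []) :
    Φ (M.ofWord w) = ∑ s ∈ Finset.Ico 1 (w.length + 1),
      M.cons (c (M.ofWord (w.take s))) (Φ (M.ofWord (w.drop s))) := by
  rw [hΦ.2 w hw, Finset.sum_Ico_succ_top (List.length_pos_iff.mpr hw), add_comm]
  simp [hΦ.1]

variable {M} in
theorem IotaRec.eventually_eq_iotaSum {c : Q →ₗ[k] A} {Φ : Q →ₗ[k] Q} (hΦ : M.IotaRec c Φ)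
    {w : List A} (hw : w ≠ []) :
    ∀ᶠ n in atTop, Φ (M.ofWord w) = M.iotaSum M.emp M.comul c n (M.ofWord w) := by
  have hdrop : ∀ᶠ n in atTop, ∀ s ∈ Finset.Ico 1 w.length,
      Φ (M.ofWord (w.drop s)) = M.iotaSum M.emp M.comul c n (M.ofWord (w.drop s)) :=
    (eventually_all_finset _).mpr fun s hs =>
      hΦ.eventually_eq_iotaSum (drop_ne_nil_of_lt_length (Finset.mem_Ico.mp hs).2)
  rw [← map_add_atTop_eq_nat 1]
  refine hdrop.mono fun n hn => ?_
  change _ = M.iotaSum M.emp M.comul c (n + 1) _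
  rw [iotaSum_succ_ofWord _ _ _ hw, hΦ.2 w hw]
  exact congrArg _ (Finset.sum_congr rfl fun s hs => by rw [hn s hs])
termination_by w.length
decreasing_by
  simp only [Finset.mem_Ico] at hs
  simp
  omega

theorem iotaComp_iff_iotaRec {c : Q →ₗ[k] A} {Φ : Q →ₗ[k] Q} :
    M.IotaComp M.emp M.comul M.counit c Φ ↔ M.IotaRec c Φ := by
  rw [iotaComp_iff]
  refine ⟨fun ⟨hemp, hker⟩ => ⟨hemp, fun w hw => ?_⟩, fun hΦ => ⟨hΦ.1, ?_⟩⟩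
  · have hdrop : ∀ᶠ n in atTop, ∀ s ∈ Finset.Ico 1 w.length,
        Φ (M.ofWord (w.drop s)) = M.iotaSum M.emp M.comul c n (M.ofWord (w.drop s)) :=
      (eventually_all_finset _).mpr fun s hs =>
        hker (M.ofWord_mem_ker_counit (drop_ne_nil_of_lt_length (Finset.mem_Ico.mp hs).2))
    have hw' : ∀ᶠ n in atTop,
        Φ (M.ofWord w) = M.iotaSum M.emp M.comul c (n + 1) (M.ofWord w) :=
      (tendsto_add_atTop_nat 1).eventually (hker (M.ofWord_mem_ker_counit hw))
    obtain ⟨n, hn, hdropn⟩ := (hw'.and hdrop).exists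
    rw [hn, iotaSum_succ_ofWord _ _ _ hw]
    exact congrArg _ (Finset.sum_congr rfl fun s hs => by rw [hdropn s hs])
  · refine M.ker_counit_le_span.trans (Submodule.span_le.mpr ?_)
    rintro _ ⟨w, hw, rfl⟩
    exact hΦ.eventually_eq_iotaSum hw

variable {M} in
theorem IotaComp.unique {c : Q →ₗ[k] A} {Φ₁ Φ₂ : Q →ₗ[k] Q}
    (h₁ : M.IotaComp M.emp M.comul M.counit c Φ₁)
    (h₂ : M.IotaComp M.emp M.comul M.counit c Φ₂) : Φ₁ = Φ₂ := by
  rw [iotaComp_iff] at h₁ h₂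
  refine M.ext_ofWord fun w => ?_
  rcases eq_or_ne w [] with rfl | hw
  · rw [ofWord_nil, h₁.1, h₂.1]
  · obtain ⟨n, hn₁, hn₂⟩ :=
      ((h₁.2 (M.ofWord_mem_ker_counit hw)).and (h₂.2 (M.ofWord_mem_ker_counit hw))).exists
    exact hn₁.trans hn₂.symm

theorem apply_emp_eq_emp {Ψ : Q →ₗ[k] Q} (hcou : M.counit ∘ₗ Ψ = M.counit)
    (hcom : M.comul ∘ₗ Ψ = TensorProduct.map Ψ Ψ ∘ₗ M.comul) : Ψ M.emp = M.emp := by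
  refine eq_of_comul_eq_tmul_self M.isConilpotent M.comul_emp (LinearMap.congr_fun hcou _) ?_
  simpa [M.comul_emp] using LinearMap.congr_fun hcom M.emp

variable {M} in
theorem IotaRec.counit_comp {c : Q →ₗ[k] A} {Φ : Q →ₗ[k] Q} (hΦ : M.IotaRec c Φ) :
    M.counit ∘ₗ Φ = M.counit := by
  refine M.ext_ofWord fun w => ?_
  rcases eq_or_ne w [] with rfl | hw
  · simp [hΦ.1]
  · simp [hΦ.2 w hw, M.counit_cons, M.counit_ofWord hw]

variable {M} in
theorem IotaRec.comul_apply_ofWord {c : Q →ₗ[k] A} {Φ : Q →ₗ[k] Q} (hΦ : M.IotaRec c Φ)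
    (w : List A) :
    M.comul (Φ (M.ofWord w)) = TensorProduct.map Φ Φ (M.comul (M.ofWord w)) := by
  rcases eq_or_ne w [] with rfl | hw
  · simp [hΦ.1, M.comul_emp]
  calc M.comul (Φ (M.ofWord w))
      = M.emp ⊗ₜ[k] Φ (M.ofWord w) +
          ∑ s ∈ Finset.Ico 1 (w.length + 1), ∑ t ∈ Finset.Ico s (w.length + 1),
            M.cons (c (M.ofWord (w.take s))) (Φ (M.ofWord ((w.take t).drop s))) ⊗ₜ[k]
              Φ (M.ofWord (w.drop t)) := by
        rw [hΦ.apply_ofWord hw, map_sum, TensorProduct.tmul_sum, ← Finset.sum_add_distrib]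
        refine Finset.sum_congr rfl fun s hs => ?_
        have hs' : 1 ≤ s ∧ s ≤ w.length := by simp only [Finset.mem_Ico] at hs; omega
        rw [M.comul_cons, hΦ.comul_apply_ofWord (w.drop s), M.comul_ofWord_drop w hs'.2]
        simp
    _ = M.emp ⊗ₜ[k] Φ (M.ofWord w) +
          ∑ t ∈ Finset.Ico 1 (w.length + 1),
            Φ (M.ofWord (w.take t)) ⊗ₜ[k] Φ (M.ofWord (w.drop t)) := by
        rw [Finset.sum_Ico_Ico_comm]
        congr 1
        refine Finset.sum_congr rfl fun t ht => ?_
        have ht' : 1 ≤ t ∧ t ≤ w.length := by simp only [Finset.mem_Ico] at ht; omega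
        have htake : w.take t ≠ [] := by simp [List.take_eq_nil_iff, hw]; omega
        rw [hΦ.apply_ofWord htake, TensorProduct.sum_tmul, List.length_take, min_eq_left ht'.2]
        refine Finset.sum_congr rfl fun s hs => ?_
        rw [List.take_take, min_eq_left (by simp only [Finset.mem_Ico] at hs; omega)]
    _ = TensorProduct.map Φ Φ (M.comul (M.ofWord w)) := by
        rw [M.comul_ofWord, map_sum, Finset.range_eq_Ico,
          Finset.sum_eq_sum_Ico_succ_bot (Nat.succ_pos _)]
        simp [hΦ.1]
termination_by w.length
decreasing_by
  simp
  omega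

variable {M} in
theorem IotaRec.comul_comp {c : Q →ₗ[k] A} {Φ : Q →ₗ[k] Q} (hΦ : M.IotaRec c Φ) :
    M.comul ∘ₗ Φ = TensorProduct.map Φ Φ ∘ₗ M.comul :=
  M.ext_ofWord hΦ.comul_apply_ofWord

end NonUnital

section Unital

variable {A Q : Type*} [Ring A] [Algebra k A] [AddCommGroup Q] [Module k Q] {M : QShModel k A Q}
  {j : Q →ₗ[k] A}

theorem IsJ.apply_cons_of_mem_ker (hj : M.IsJ j) (a : A) {x : Q}
    (hx : x ∈ LinearMap.ker M.counit) : j (M.cons a x) = 0 := by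
  suffices LinearMap.ker M.counit ≤ LinearMap.ker (j ∘ₗ M.cons a) from this hx
  refine M.ker_counit_le_span.trans (Submodule.span_le.mpr ?_)
  rintro _ ⟨w, hw, rfl⟩
  obtain ⟨b, v, rfl⟩ := List.exists_cons_of_ne_nil hw
  exact hj.2.2 a b _

theorem IsJ.iotaRec_id (hj : M.IsJ j) : M.IotaRec j LinearMap.id := by
  refine ⟨rfl, fun w hw => ?_⟩
  obtain ⟨a, v, rfl⟩ := List.exists_cons_of_ne_nil hw
  cases v with
  | nil => simp [hj.2.1]
  | cons b v =>
    rw [Finset.sum_eq_single_of_mem 1 (by simp)]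
    · simp [hj.2.1, hj.2.2]
    · intro s hs hs1
      obtain ⟨s, rfl⟩ : ∃ s', s = s' + 2 := ⟨s - 2, by simp only [Finset.mem_Ico] at hs; omega⟩
      simp [hj.2.2]

theorem IsJ.iotaComp_id (hj : M.IsJ j) : M.IotaComp M.emp M.comul M.counit j LinearMap.id :=
  M.iotaComp_iff_iotaRec.mpr hj.iotaRec_id

theorem IotaRec.j_comp (hj : M.IsJ j) {c : Q →ₗ[k] A} (hc : c M.emp = 1) {Φ : Q →ₗ[k] Q}
    (hΦ : M.IotaRec c Φ) : j ∘ₗ Φ = c := by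
  refine M.ext_ofWord fun w => ?_
  rcases eq_or_ne w [] with rfl | hw
  · simp [hΦ.1, hj.1, hc]
  rw [LinearMap.comp_apply, hΦ.2 w hw, map_add, map_sum, Finset.sum_eq_zero, add_zero,
    hj.2.1]
  intro s hs
  refine hj.apply_cons_of_mem_ker _ ?_
  rw [LinearMap.mem_ker, ← LinearMap.comp_apply, hΦ.counit_comp]
  exact M.counit_ofWord (drop_ne_nil_of_lt_length (Finset.mem_Ico.mp hs).2)

end Unital

end QShModel

end QShPaper

open QShPaper in
theorem stmt16_universal_semigroup_general
    (k : Type*) [Field k]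
    (A : Type*) [Ring A] [Algebra k A]
    (Q : Type*) [AddCommGroup Q] [Module k Q]
    (M : QShModel k A Q) (j : Q →ₗ[k] A) (hj : M.IsJ j) :
    -- `Φ_g = QSh(g) ∘ ι` is a coalgebra endomorphism of `QSh(A)`, and `j ∘ Φ_g = g`
    -- (in particular `j ⊙ g = g`, i.e. `j` is a left unit for `⊙`)
    (∀ (g : Q →ₗ[k] A) (Φ : Q →ₗ[k] Q), g M.emp = 1 →
      M.IotaComp M.emp M.comul M.counit g Φ →
        (M.counit ∘ₗ Φ = M.counit ∧
          M.comul ∘ₗ Φ = TensorProduct.map Φ Φ ∘ₗ M.comul ∧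
          j ∘ₗ Φ = g)) ∧
    -- every coalgebra endomorphism `Ψ` of `QSh(A)` arises this way: `Ψ = Φ_{j ∘ Ψ}`
    -- (so `f ↦ Φ_f` is a bijection onto coalgebra endomorphisms)
    (∀ Ψ : Q →ₗ[k] Q,
      M.counit ∘ₗ Ψ = M.counit →
      M.comul ∘ₗ Ψ = TensorProduct.map Ψ Ψ ∘ₗ M.comul →
      M.IotaComp M.emp M.comul M.counit (j ∘ₗ Ψ) Ψ) ∧
    -- `Φ_j = Id`, hence `f ⊙ j = f ∘ₗ Φ_j = f`: `j` is a right unit for `⊙`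
    (∀ Φ : Q →ₗ[k] Q,
      M.IotaComp M.emp M.comul M.counit j Φ → Φ = LinearMap.id) ∧
    -- `Φ_{g ⊙ h} = Φ_g ∘ Φ_h`: `⊙` corresponds to composition of coalgebra endomorphisms,
    -- hence is associative
    (∀ (g h : Q →ₗ[k] A) (Φg Φh : Q →ₗ[k] Q), g M.emp = 1 → h M.emp = 1 →
      M.IotaComp M.emp M.comul M.counit g Φg →
      M.IotaComp M.emp M.comul M.counit h Φh →
      M.IotaComp M.emp M.comul M.counit (g ∘ₗ Φh) (Φg ∘ₗ Φh)) := by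
  refine ⟨fun g Φ hg hΦ => ?_, fun Ψ hcou hcom => ?_, fun Φ hΦ => hΦ.unique hj.iotaComp_id,
    fun g h Φg Φh _ _ hΦg hΦh => ?_⟩
  · have hrec := M.iotaComp_iff_iotaRec.mp hΦ
    exact ⟨hrec.counit_comp, hrec.comul_comp, hrec.j_comp hj hg⟩
  · have hΨ := hj.iotaComp_id.comp (M.apply_emp_eq_emp hcou hcom) hcom hcou
    rwa [LinearMap.id_comp] at hΨ
  · have hrec := M.iotaComp_iff_iotaRec.mp hΦh
    exact hΦg.comp hrec.1 hrec.comul_comp hrec.counit_comp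

open QShPaper in
/-- For a unital algebra `A`, the operation `f ⊙ g := f ∘ QSh(g) ∘ ι`
makes `U(QSh(A), A)` an associative monoid (the universal semigroup of `A`) with two-sided
unit `j`; under `f ↦ Φ_f := QSh(f) ∘ ι` it corresponds to composition of coalgebra
endomorphisms of `QSh(A)`. Below, `M.IotaComp M.emp M.comul M.counit g Φ` expresses that
`Φ = QSh(g) ∘ ι`, so that `f ⊙ g = f ∘ₗ Φ`. -/
theorem stmt16_universal_semigroup
    (k : Type*) [Field k] [CharZero k]
    (A : Type*) [Ring A] [Algebra k A]
    (Q : Type*) [AddCommGroup Q] [Module k Q]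
    (M : QShModel k A Q) (j : Q →ₗ[k] A) (hj : M.IsJ j) :
    -- `Φ_g = QSh(g) ∘ ι` is a coalgebra endomorphism of `QSh(A)`, and `j ∘ Φ_g = g`
    -- (in particular `j ⊙ g = g`, i.e. `j` is a left unit for `⊙`)
    (∀ (g : Q →ₗ[k] A) (Φ : Q →ₗ[k] Q), g M.emp = 1 →
      M.IotaComp M.emp M.comul M.counit g Φ →
        (M.counit ∘ₗ Φ = M.counit ∧
          M.comul ∘ₗ Φ = TensorProduct.map Φ Φ ∘ₗ M.comul ∧
          j ∘ₗ Φ = g)) ∧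
    -- every coalgebra endomorphism `Ψ` of `QSh(A)` arises this way: `Ψ = Φ_{j ∘ Ψ}`
    -- (so `f ↦ Φ_f` is a bijection onto coalgebra endomorphisms)
    (∀ Ψ : Q →ₗ[k] Q,
      M.counit ∘ₗ Ψ = M.counit →
      M.comul ∘ₗ Ψ = TensorProduct.map Ψ Ψ ∘ₗ M.comul →
      M.IotaComp M.emp M.comul M.counit (j ∘ₗ Ψ) Ψ) ∧
    -- `Φ_j = Id`, hence `f ⊙ j = f ∘ₗ Φ_j = f`: `j` is a right unit for `⊙`
    (∀ Φ : Q →ₗ[k] Q,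
      M.IotaComp M.emp M.comul M.counit j Φ → Φ = LinearMap.id) ∧
    -- `Φ_{g ⊙ h} = Φ_g ∘ Φ_h`: `⊙` corresponds to composition of coalgebra endomorphisms,
    -- hence is associative
    (∀ (g h : Q →ₗ[k] A) (Φg Φh : Q →ₗ[k] Q), g M.emp = 1 → h M.emp = 1 →
      M.IotaComp M.emp M.comul M.counit g Φg →
      M.IotaComp M.emp M.comul M.counit h Φh →
      M.IotaComp M.emp M.comul M.counit (g ∘ₗ Φh) (Φg ∘ₗ Φh)) :=
  stmt16_universal_semigroup_general k A Q M j hj
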